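/- Let Φ be a simply-laced root system of type D_l (l≥5) or E_l, with roots of length 1, let α ⊥ β ∈ Φ, and let Ω = {β_1,…,β_{−1}} be a maximal square with β_1 = α, β_{−1} = β, β_i ⊥ β_{−i}. Then S_π(α,β) = {(γ,−γ) : γ ∈ Φ, (γ,α) = (γ,β) = −1/2} equals {(−β_i, β_i) : i ≠ ±1}, and S'_π(α,β) = {(γ,−γ) : γ ∈ Φ, (γ,α) = −1/2, (γ,β) = 1/2} equals {(β_i − β_1, β_1 − β_i) : i ≠ ±1}. -/

import Mathlib

open scoped RealInnerProductSpace

noncomputable section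

/-- The root system of type `D_l`, normalized so all roots have length `1`:
the vectors `(±eᵢ ± eⱼ)/√2` for `i ≠ j`. -/
def Droots (l : ℕ) : Set (EuclideanSpace ℝ (Fin l)) :=
  {v | ∃ i j : Fin l, i ≠ j ∧ ∃ a b : ℝ, (a = 1 ∨ a = -1) ∧ (b = 1 ∨ b = -1) ∧
    ∀ t, v t = (a * (if t = i then 1 else 0) + b * (if t = j then 1 else 0)) / Real.sqrt 2}

/-- The root system of type `E₈`, normalized so all roots have length `1`:
the vectors `(±eᵢ ± eⱼ)/√2` (`i ≠ j`) together with `(ε₁,…,ε₈)/(2√2)` where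
each `εᵢ = ±1` and the number of minus signs is even. -/
def E8roots : Set (EuclideanSpace ℝ (Fin 8)) :=
  {v | (∃ i j : Fin 8, i ≠ j ∧ ∃ a b : ℝ, (a = 1 ∨ a = -1) ∧ (b = 1 ∨ b = -1) ∧
      ∀ t, v t = (a * (if t = i then 1 else 0) + b * (if t = j then 1 else 0)) / Real.sqrt 2) ∨
    (∃ ε : Fin 8 → ℝ, (∀ i, ε i = 1 ∨ ε i = -1) ∧
      Even (Finset.univ.filter (fun i => ε i = -1)).card ∧
      ∀ t, v t = ε t / (2 * Real.sqrt 2))}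

/-- The root system of type `E₇`: the roots of `E₈` orthogonal to the root
`(e₇ + e₈)/√2`. -/
def E7roots : Set (EuclideanSpace ℝ (Fin 8)) := {v ∈ E8roots | v 6 + v 7 = 0}

/-- The root system of type `E₆`: the roots of `E₈` orthogonal to the
`A₂`-pair `(e₇+e₈)/√2`, `(e₆+e₇)/√2`. -/
def E6roots : Set (EuclideanSpace ℝ (Fin 8)) :=
  {v ∈ E8roots | v 6 + v 7 = 0 ∧ v 5 + v 6 = 0}

/-- `Φ ⊆ E` is (the image under a linear isometry of) a root system of type
`D_l` (`l ≥ 5`) or `E₆`, `E₇`, `E₈`, with all roots of length `1`. -/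
def IsDERootSystem {E : Type*} [NormedAddCommGroup E] [InnerProductSpace ℝ E]
    (Φ : Set E) : Prop :=
  (∃ l : ℕ, 5 ≤ l ∧ ∃ f : EuclideanSpace ℝ (Fin l) →ₗᵢ[ℝ] E, Φ = f '' Droots l) ∨
  (∃ f : EuclideanSpace ℝ (Fin 8) →ₗᵢ[ℝ] E,
    Φ = f '' E6roots ∨ Φ = f '' E7roots ∨ Φ = f '' E8roots)

end

/-- A maximal square in `Φ`: a family of roots `β_{±1},…,β_{±k}` (here indexed by
`Fin k × Bool`, the pair `(i, true)`/`(i, false)` playing the role of `β_{i}, β_{-i}`)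
with `(β_i, β_{-i}) = 0` and `(β_i, β_j) = 1/2` for `i ≠ ±j`, which is moreover
maximal: every pair of roots summing to `β_i + β_{-i}` already lies in the square. -/
def IsMaximalSquare {E : Type*} [NormedAddCommGroup E] [InnerProductSpace ℝ E]
    (Φ : Set E) (k : ℕ) (β : Fin k → Bool → E) : Prop :=
  (∀ i b, β i b ∈ Φ) ∧ (∀ i, ⟪β i true, β i false⟫ = 0) ∧
  (∀ i j, i ≠ j → ∀ b c, ⟪β i b, β j c⟫ = 1 / 2) ∧
  (∀ γ ∈ Φ, ∀ δ ∈ Φ, ∀ i, γ + δ = β i true + β i false → ∃ j b, γ = β j b)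

lemma innerD {n : ℕ} (u v : EuclideanSpace ℝ (Fin n)) (i j i' j' : Fin n) (a b a' b' : ℝ)
    (hu : ∀ t, u t = (a * (if t = i then 1 else 0) + b * (if t = j then 1 else 0)) / Real.sqrt 2)
    (hv : ∀ t, v t = (a' * (if t = i' then 1 else 0) + b' * (if t = j' then 1 else 0)) / Real.sqrt 2) :
    ⟪u,v⟫ = (a*a' * (if i = i' then 1 else 0) + a*b' * (if i = j' then 1 else 0)
      + b*a' * (if j = i' then 1 else 0) + b*b' * (if j = j' then 1 else 0))/2 := by
  have h2 : Real.sqrt 2 * Real.sqrt 2 = 2 := Real.mul_self_sqrt (by norm_num)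
  have key : ∀ t : Fin n, u t * v t =
      (a*a' * ((if t = i then (1:ℝ) else 0) * (if t = i' then 1 else 0))
      + a*b' * ((if t = i then (1:ℝ) else 0) * (if t = j' then 1 else 0))
      + b*a' * ((if t = j then (1:ℝ) else 0) * (if t = i' then 1 else 0))
      + b*b' * ((if t = j then (1:ℝ) else 0) * (if t = j' then 1 else 0)))/2 := by
    intro t
    rw [hu, hv, div_mul_div_comm, h2]
    ring
  simp only [PiLp.inner_apply, RCLike.inner_apply, conj_trivial, key]
  rw [Finset.sum_congr rfl (fun t _ => (mul_comm (v t) (u t)).trans (key t))]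
  rw [← Finset.sum_div]
  simp [Finset.sum_add_distrib, ← Finset.mul_sum, ite_and, Finset.sum_ite_eq, eq_comm]

lemma Droots_neg {l : ℕ} {v : EuclideanSpace ℝ (Fin l)} (hv : v ∈ Droots l) : -v ∈ Droots l := by
  obtain ⟨i, j, hij, a, b, ha, hb, hrep⟩ := hv
  exact ⟨i, j, hij, -a, -b, by rcases ha with rfl|rfl; exact Or.inr rfl; exact Or.inl (by norm_num),
    by rcases hb with rfl|rfl; exact Or.inr rfl; exact Or.inl (by norm_num),
    fun t => by rw [PiLp.neg_apply, hrep, ← neg_div]; ring_nf⟩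

lemma Droots_norm {l : ℕ} {v : EuclideanSpace ℝ (Fin l)} (hv : v ∈ Droots l) : ⟪v,v⟫ = 1 := by
  obtain ⟨i, j, hij, a, b, ha, hb, hrep⟩ := hv
  rw [innerD v v i j i j a b a b hrep hrep, if_pos rfl, if_pos rfl, if_neg hij,
    if_neg (Ne.symm hij)]
  rcases ha with rfl|rfl <;> rcases hb with rfl|rfl <;> norm_num

lemma Droots_add {l : ℕ} {u v : EuclideanSpace ℝ (Fin l)} (hu : u ∈ Droots l) (hv : v ∈ Droots l)
    (h : ⟪u,v⟫ = -(1/2)) : u + v ∈ Droots l := by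
  obtain ⟨i, j, hij, a, b, ha, hb, hrep⟩ := hu
  obtain ⟨i', j', hij', a', b', ha', hb', hrep'⟩ := hv
  rw [innerD u v i j i' j' a b a' b' hrep hrep'] at h
  have addrep : ∀ t, (u + v) t = ((a * (if t = i then 1 else 0) + b * (if t = j then 1 else 0))
      + (a' * (if t = i' then 1 else 0) + b' * (if t = j' then 1 else 0))) / Real.sqrt 2 := by
    intro t; rw [PiLp.add_apply, hrep, hrep', ← add_div]
  by_cases h1 : i = i' <;> by_cases h2 : i = j' <;> by_cases h3 : j = i' <;> by_cases h4 : j = j'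
  · exact absurd (h1.symm.trans h2) hij'
  · exact absurd (h1.symm.trans h2) hij'
  · exact absurd (h1.symm.trans h2) hij'
  · exact absurd (h1.symm.trans h2) hij'
  · exact absurd (h1.trans h3.symm) hij
  · exact absurd (h1.trans h3.symm) hij
  · rw [if_pos h1, if_neg h2, if_neg h3, if_pos h4] at h
    rcases ha with rfl|rfl <;> rcases hb with rfl|rfl <;> rcases ha' with rfl|rfl <;>
      rcases hb' with rfl|rfl <;> norm_num at h
  · rw [if_pos h1, if_neg h2, if_neg h3, if_neg h4] at h
    have haa : a' = -a := by
      rcases ha with rfl|rfl <;> rcases ha' with rfl|rfl <;> rcases hb with rfl|rfl <;>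
        rcases hb' with rfl|rfl <;> norm_num at h <;> norm_num
    refine ⟨j, j', h4, b, b', hb, hb', fun t => ?_⟩
    rw [addrep, haa, ← h1]
    ring
  · exact absurd (h3.symm.trans h4) hij'
  · rw [if_neg h1, if_pos h2, if_pos h3, if_neg h4] at h
    rcases ha with rfl|rfl <;> rcases hb with rfl|rfl <;> rcases ha' with rfl|rfl <;>
      rcases hb' with rfl|rfl <;> norm_num at h
  · exact absurd (h2.trans h4.symm) hij
  · rw [if_neg h1, if_pos h2, if_neg h3, if_neg h4] at h
    have hab : b' = -a := by
      rcases ha with rfl|rfl <;> rcases hb' with rfl|rfl <;> rcases hb with rfl|rfl <;>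
        rcases ha' with rfl|rfl <;> norm_num at h <;> norm_num
    refine ⟨j, i', h3, b, a', hb, ha', fun t => ?_⟩
    rw [addrep, hab, ← h2]
    ring
  · exact absurd (h3.symm.trans h4) hij'
  · rw [if_neg h1, if_neg h2, if_pos h3, if_neg h4] at h
    have hba : a' = -b := by
      rcases hb with rfl|rfl <;> rcases ha' with rfl|rfl <;> rcases ha with rfl|rfl <;>
        rcases hb' with rfl|rfl <;> norm_num at h <;> norm_num
    refine ⟨i, j', h2, a, b', ha, hb', fun t => ?_⟩
    rw [addrep, hba, ← h3]
    ring
  · rw [if_neg h1, if_neg h2, if_neg h3, if_pos h4] at h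
    have hbb : b' = -b := by
      rcases hb with rfl|rfl <;> rcases hb' with rfl|rfl <;> rcases ha with rfl|rfl <;>
        rcases ha' with rfl|rfl <;> norm_num at h <;> norm_num
    refine ⟨i, i', h1, a, a', ha, ha', fun t => ?_⟩
    rw [addrep, hbb, ← h4]
    ring
  · rw [if_neg h1, if_neg h2, if_neg h3, if_neg h4] at h
    norm_num at h

lemma innerDE (u v : EuclideanSpace ℝ (Fin 8)) (i j : Fin 8) (a b : ℝ) (ε : Fin 8 → ℝ)
    (hu : ∀ t, u t = (a * (if t = i then 1 else 0) + b * (if t = j then 1 else 0)) / Real.sqrt 2)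
    (hv : ∀ t, v t = ε t / (2 * Real.sqrt 2)) :
    ⟪u,v⟫ = (a * ε i + b * ε j) / 4 := by
  have h2 : Real.sqrt 2 * Real.sqrt 2 = 2 := Real.mul_self_sqrt (by norm_num)
  have key : ∀ t : Fin 8, u t * v t =
      (a * ((if t = i then (1:ℝ) else 0) * ε t) + b * ((if t = j then (1:ℝ) else 0) * ε t)) / 4 := by
    intro t
    rw [hu, hv, div_mul_div_comm]
    rw [show Real.sqrt 2 * (2 * Real.sqrt 2) = 4 by rw [mul_comm 2, ← mul_assoc, h2]; norm_num]
    ring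
  simp only [PiLp.inner_apply, RCLike.inner_apply, conj_trivial, key]
  rw [Finset.sum_congr rfl (fun t _ => (mul_comm (v t) (u t)).trans (key t))]
  rw [← Finset.sum_div]
  simp [Finset.sum_add_distrib, ← Finset.mul_sum, ite_mul, Finset.sum_ite_eq]

lemma innerEE (u v : EuclideanSpace ℝ (Fin 8)) (ε ε' : Fin 8 → ℝ)
    (hu : ∀ t, u t = ε t / (2 * Real.sqrt 2)) (hv : ∀ t, v t = ε' t / (2 * Real.sqrt 2)) :
    ⟪u,v⟫ = (∑ t, ε t * ε' t) / 8 := by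
  have h2 : Real.sqrt 2 * Real.sqrt 2 = 2 := Real.mul_self_sqrt (by norm_num)
  have key : ∀ t : Fin 8, u t * v t = (ε t * ε' t) / 8 := by
    intro t
    rw [hu, hv, div_mul_div_comm]
    rw [show (2 * Real.sqrt 2) * (2 * Real.sqrt 2) = 8 by nlinarith [h2]]
  simp only [PiLp.inner_apply, RCLike.inner_apply, conj_trivial, key]
  rw [Finset.sum_congr rfl (fun t _ => (mul_comm (v t) (u t)).trans (key t))]
  rw [← Finset.sum_div]

lemma parity_prod (ε : Fin 8 → ℝ) (hε : ∀ i, ε i = 1 ∨ ε i = -1) :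
    Even (Finset.univ.filter (fun i => ε i = -1)).card ↔ ∏ i, ε i = 1 := by
  have : ∏ i, ε i = (-1 : ℝ) ^ (Finset.univ.filter (fun i => ε i = -1)).card := by
    rw [← Finset.prod_filter_mul_prod_filter_not Finset.univ (fun i => ε i = -1)]
    rw [Finset.prod_congr rfl (fun i hi => (Finset.mem_filter.mp hi).2),
      Finset.prod_congr rfl (fun i hi => ((hε i).resolve_right (Finset.mem_filter.mp hi).2 : ε i = 1))]
    simp
  rw [this]
  constructor
  · intro h; exact h.neg_one_pow
  · intro h
    by_contra hodd
    rw [(Nat.not_even_iff_odd.mp hodd).neg_one_pow] at h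
    norm_num at h

lemma E8_add_mixed (u v : EuclideanSpace ℝ (Fin 8)) (i j : Fin 8) (hij : i ≠ j) (a b : ℝ)
    (ha : a = 1 ∨ a = -1) (hb : b = 1 ∨ b = -1)
    (hrep : ∀ t, u t = (a * (if t = i then 1 else 0) + b * (if t = j then 1 else 0)) / Real.sqrt 2)
    (ε : Fin 8 → ℝ) (hε : ∀ i, ε i = 1 ∨ ε i = -1)
    (hpar : Even (Finset.univ.filter (fun i => ε i = -1)).card)
    (hrep' : ∀ t, v t = ε t / (2 * Real.sqrt 2))
    (h : ⟪u,v⟫ = -(1/2)) : u + v ∈ E8roots := by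
  have hs : Real.sqrt 2 ≠ 0 := by positivity
  rw [innerDE u v i j a b ε hrep hrep'] at h
  have h4 : a * ε i + b * ε j = -2 := by linarith
  have hab : a = -ε i ∧ b = -ε j := by
    rcases ha with rfl|rfl <;> rcases hb with rfl|rfl <;> rcases hε i with hi'|hi' <;>
      rcases hε j with hj'|hj' <;> rw [hi', hj'] at h4 ⊢ <;> norm_num at h4 <;> norm_num
  set ε' : Fin 8 → ℝ := fun t => if t = i then -ε i else if t = j then -ε j else ε t with hε'def
  have hsigns : ∀ t, ε' t = 1 ∨ ε' t = -1 := by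
    intro t; simp only [ε']; split_ifs
    · rcases hε i with h'|h' <;> rw [h'] <;> norm_num
    · rcases hε j with h'|h' <;> rw [h'] <;> norm_num
    · exact hε t
  refine Or.inr ⟨ε', hsigns, ?_, ?_⟩
  · rw [parity_prod ε' hsigns]
    have hjmem : j ∈ Finset.univ.erase i := Finset.mem_erase.mpr ⟨Ne.symm hij, Finset.mem_univ j⟩
    have key : ∀ f : Fin 8 → ℝ,
        ∏ t, f t = f i * (f j * ∏ t ∈ (Finset.univ.erase i).erase j, f t) := by
      intro f
      rw [← Finset.mul_prod_erase Finset.univ f (Finset.mem_univ i),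
        ← Finset.mul_prod_erase _ f hjmem]
    have e1 : ε' i = -ε i := by simp [ε']
    have e2 : ε' j = -ε j := by simp [ε', Ne.symm hij]
    have e3 : ∏ t ∈ (Finset.univ.erase i).erase j, ε' t
        = ∏ t ∈ (Finset.univ.erase i).erase j, ε t := by
      refine Finset.prod_congr rfl (fun t ht => ?_)
      have h' := Finset.mem_erase.mp ht
      simp only [ε', if_neg (Finset.mem_erase.mp h'.2).1, if_neg h'.1]
    have hprod : ∏ t, ε t = 1 := (parity_prod ε hε).mp hpar
    rw [key ε] at hprod
    rw [key ε', e1, e2, e3]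
    nlinarith [hprod]
  · intro t
    rw [PiLp.add_apply, hrep, hrep']
    simp only [ε']
    by_cases ht1 : t = i
    · rw [if_pos ht1, if_pos ht1, if_neg (ht1 ▸ hij : ¬ t = j), hab.1, ht1]
      field_simp
      ring
    · by_cases ht2 : t = j
      · rw [if_neg ht1, if_neg ht1, if_pos ht2, if_pos ht2, hab.2, ht2]
        field_simp
        ring
      · rw [if_neg ht1, if_neg ht1, if_neg ht2, if_neg ht2]
        simp

lemma E8_add_EE (u v : EuclideanSpace ℝ (Fin 8)) (ε ε' : Fin 8 → ℝ)
    (hε : ∀ i, ε i = 1 ∨ ε i = -1) (hε' : ∀ i, ε' i = 1 ∨ ε' i = -1)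
    (hrep : ∀ t, u t = ε t / (2 * Real.sqrt 2)) (hrep' : ∀ t, v t = ε' t / (2 * Real.sqrt 2))
    (h : ⟪u,v⟫ = -(1/2)) : u + v ∈ E8roots := by
  have hs : Real.sqrt 2 ≠ 0 := by positivity
  rw [innerEE u v ε ε' hrep hrep'] at h
  have hsum : ∑ t, ε t * ε' t = -4 := by linarith
  have hval : ∀ t : Fin 8, ε t * ε' t = (if ε t = ε' t then (1:ℝ) else -1) := by
    intro t
    rcases hε t with h1|h1 <;> rcases hε' t with h2|h2 <;> rw [h1, h2] <;> norm_num
  rw [Finset.sum_congr rfl (fun t _ => hval t), Finset.sum_ite, Finset.sum_const,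
    Finset.sum_const] at hsum
  have hctot := Finset.card_filter_add_card_filter_not
    (s := (Finset.univ : Finset (Fin 8))) (p := fun t => ε t = ε' t)
  rw [Finset.card_univ, Fintype.card_fin] at hctot
  have hcard : (Finset.univ.filter (fun t => ε t = ε' t)).card = 2 := by
    have h1 : ((Finset.univ.filter (fun t => ε t = ε' t)).card : ℝ) * 1
        + ((Finset.univ.filter (fun t => ¬ ε t = ε' t)).card : ℝ) * (-1) = -4 := by
      push_cast [nsmul_eq_mul] at hsum
      linarith [hsum]
    have h2 : ((Finset.univ.filter (fun t => ε t = ε' t)).card : ℝ)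
        + ((Finset.univ.filter (fun t => ¬ ε t = ε' t)).card : ℝ) = 8 := by
      exact_mod_cast congrArg (Nat.cast : ℕ → ℝ) hctot
    have : ((Finset.univ.filter (fun t => ε t = ε' t)).card : ℝ) = 2 := by linarith
    exact_mod_cast this
  obtain ⟨i, j, hij, hAij⟩ := Finset.card_eq_two.mp hcard
  have hmemA : ∀ t : Fin 8, (ε t = ε' t) ↔ (t = i ∨ t = j) := by
    intro t
    constructor
    · intro ht
      have : t ∈ Finset.univ.filter (fun t => ε t = ε' t) := Finset.mem_filter.mpr ⟨Finset.mem_univ t, ht⟩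
      rw [hAij, Finset.mem_insert, Finset.mem_singleton] at this
      exact this
    · intro ht
      have : t ∈ ({i, j} : Finset (Fin 8)) := by
        rcases ht with rfl|rfl <;> simp
      rw [← hAij, Finset.mem_filter] at this
      exact this.2
  refine Or.inl ⟨i, j, hij, ε i, ε j, hε i, hε j, fun t => ?_⟩
  rw [PiLp.add_apply, hrep, hrep']
  by_cases ht1 : t = i
  · subst ht1
    rw [if_pos rfl, if_neg hij, ← (hmemA t).mpr (Or.inl rfl)]
    field_simp
    ring
  · by_cases ht2 : t = j
    · subst ht2
      rw [if_neg ht1, if_pos rfl, ← (hmemA t).mpr (Or.inr rfl)]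
      field_simp
      ring
    · rw [if_neg ht1, if_neg ht2]
      have hne : ¬ ε t = ε' t := fun hc => by
        rcases (hmemA t).mp hc with h'|h' <;> [exact ht1 h'; exact ht2 h']
      have : ε' t = -ε t := by
        rcases hε t with h1|h1 <;> rcases hε' t with h2|h2 <;> rw [h1, h2] at hne ⊢ <;> norm_num at hne <;> norm_num
      rw [this]
      field_simp
      ring


lemma E8roots_norm {v : EuclideanSpace ℝ (Fin 8)} (hv : v ∈ E8roots) : ⟪v,v⟫ = 1 := by
  rcases hv with hv | ⟨ε, hε, hpar, hrep⟩
  · exact Droots_norm (hv : v ∈ Droots 8)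
  · rw [innerEE v v ε ε hrep hrep,
      Finset.sum_congr rfl (fun t _ => show ε t * ε t = 1 by
        rcases hε t with h|h <;> rw [h] <;> norm_num)]
    simp

lemma E8roots_neg {v : EuclideanSpace ℝ (Fin 8)} (hv : v ∈ E8roots) : -v ∈ E8roots := by
  rcases hv with hv | ⟨ε, hε, hpar, hrep⟩
  · exact Or.inl (Droots_neg (hv : v ∈ Droots 8) : -v ∈ Droots 8)
  · have hsigns : ∀ t, -ε t = 1 ∨ -ε t = -1 := fun t => by
      rcases hε t with h|h <;> rw [h] <;> norm_num
    refine Or.inr ⟨fun t => -ε t, hsigns, ?_, fun t => by rw [PiLp.neg_apply, hrep, ← neg_div]⟩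
    rw [parity_prod _ hsigns]
    have : ∏ t : Fin 8, -ε t = (-1 : ℝ) ^ (8 : ℕ) * ∏ t : Fin 8, ε t := by
      rw [show (fun t : Fin 8 => -ε t) = fun t => (-1) * ε t by funext t; ring,
        Finset.prod_mul_distrib, Finset.prod_const, Finset.card_univ, Fintype.card_fin]
    rw [this, (parity_prod ε hε).mp hpar]
    norm_num

lemma E8roots_add {u v : EuclideanSpace ℝ (Fin 8)} (hu : u ∈ E8roots) (hv : v ∈ E8roots)
    (h : ⟪u,v⟫ = -(1/2)) : u + v ∈ E8roots := by
  rcases hu with hu | ⟨ε, hε, hpar, hrep⟩ <;> rcases hv with hv | ⟨ε', hε', hpar', hrep'⟩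
  · exact Or.inl (Droots_add (hu : u ∈ Droots 8) (hv : v ∈ Droots 8) h : u + v ∈ Droots 8)
  · obtain ⟨i, j, hij, a, b, ha, hb, hrep⟩ := hu
    exact E8_add_mixed u v i j hij a b ha hb hrep ε' hε' hpar' hrep' h
  · obtain ⟨i, j, hij, a, b, ha, hb, hrep'⟩ := hv
    rw [add_comm]
    exact E8_add_mixed v u i j hij a b ha hb hrep' ε hε hpar hrep
      (by rw [real_inner_comm]; exact h)
  · exact E8_add_EE u v ε ε' hε hε' hrep hrep' h

lemma E7roots_norm {v : EuclideanSpace ℝ (Fin 8)} (hv : v ∈ E7roots) : ⟪v,v⟫ = 1 :=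
  E8roots_norm hv.1

lemma E7roots_neg {v : EuclideanSpace ℝ (Fin 8)} (hv : v ∈ E7roots) : -v ∈ E7roots :=
  ⟨E8roots_neg hv.1, by rw [PiLp.neg_apply, PiLp.neg_apply]; linarith [hv.2]⟩

lemma E7roots_add {u v : EuclideanSpace ℝ (Fin 8)} (hu : u ∈ E7roots) (hv : v ∈ E7roots)
    (h : ⟪u,v⟫ = -(1/2)) : u + v ∈ E7roots :=
  ⟨E8roots_add hu.1 hv.1 h, by rw [PiLp.add_apply, PiLp.add_apply]; linarith [hu.2, hv.2]⟩

lemma E6roots_norm {v : EuclideanSpace ℝ (Fin 8)} (hv : v ∈ E6roots) : ⟪v,v⟫ = 1 :=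
  E8roots_norm hv.1

lemma E6roots_neg {v : EuclideanSpace ℝ (Fin 8)} (hv : v ∈ E6roots) : -v ∈ E6roots :=
  ⟨E8roots_neg hv.1, by rw [PiLp.neg_apply, PiLp.neg_apply]; linarith [hv.2.1],
    by rw [PiLp.neg_apply, PiLp.neg_apply]; linarith [hv.2.2]⟩

lemma E6roots_add {u v : EuclideanSpace ℝ (Fin 8)} (hu : u ∈ E6roots) (hv : v ∈ E6roots)
    (h : ⟪u,v⟫ = -(1/2)) : u + v ∈ E6roots :=
  ⟨E8roots_add hu.1 hv.1 h,
    by rw [PiLp.add_apply, PiLp.add_apply]; linarith [hu.2.1, hv.2.1],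
    by rw [PiLp.add_apply, PiLp.add_apply]; linarith [hu.2.2, hv.2.2]⟩

lemma good_image {n : ℕ} {E : Type*} [NormedAddCommGroup E] [InnerProductSpace ℝ E]
    (f : EuclideanSpace ℝ (Fin n) →ₗᵢ[ℝ] E) {S : Set (EuclideanSpace ℝ (Fin n))}
    (h1 : ∀ v ∈ S, ⟪v,v⟫ = (1:ℝ)) (h2 : ∀ v ∈ S, -v ∈ S)
    (h3 : ∀ u ∈ S, ∀ v ∈ S, ⟪u,v⟫ = -(1/2) → u + v ∈ S) :
    (∀ v ∈ f '' S, ⟪v,v⟫ = (1:ℝ)) ∧ (∀ v ∈ f '' S, -v ∈ f '' S) ∧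
      (∀ u ∈ f '' S, ∀ v ∈ f '' S, ⟪u,v⟫ = -(1/2) → u + v ∈ f '' S) := by
  refine ⟨?_, ?_, ?_⟩
  · rintro v ⟨x, hx, rfl⟩
    rw [f.inner_map_map]
    exact h1 x hx
  · rintro v ⟨x, hx, rfl⟩
    exact ⟨-x, h2 x hx, by rw [map_neg]⟩
  · rintro u ⟨x, hx, rfl⟩ v ⟨y, hy, rfl⟩ h
    rw [f.inner_map_map] at h
    exact ⟨x + y, h3 x hx y hy h, by rw [map_add]⟩

lemma good_of_DE {E : Type*} [NormedAddCommGroup E] [InnerProductSpace ℝ E]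
    {Φ : Set E} (hΦ : IsDERootSystem Φ) :
    (∀ v ∈ Φ, ⟪v,v⟫ = (1:ℝ)) ∧ (∀ v ∈ Φ, -v ∈ Φ) ∧
      (∀ u ∈ Φ, ∀ v ∈ Φ, ⟪u,v⟫ = -(1/2) → u + v ∈ Φ) := by
  rcases hΦ with ⟨l, -, f, rfl⟩ | ⟨f, rfl | rfl | rfl⟩
  · exact good_image f (fun v hv => Droots_norm hv) (fun v hv => Droots_neg hv)
      (fun u hu v hv h => Droots_add hu hv h)
  · exact good_image f (fun v hv => E6roots_norm hv) (fun v hv => E6roots_neg hv)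
      (fun u hu v hv h => E6roots_add hu hv h)
  · exact good_image f (fun v hv => E7roots_norm hv) (fun v hv => E7roots_neg hv)
      (fun u hu v hv h => E7roots_add hu hv h)
  · exact good_image f (fun v hv => E8roots_norm hv) (fun v hv => E8roots_neg hv)
      (fun u hu v hv h => E8roots_add hu hv h)


/-- Description of the sets `S_π(α,β)` and `S'_π(α,β)` of ordered pairs
`(γ,−γ)` of opposite roots with `(γ,α) = (γ,β) = −1/2`, respectively
`(γ,α) = −1/2`, `(γ,β) = 1/2`, for orthogonal roots `α ⊥ β` extended to a
maximal square `{B_{±1},…,B_{±k}}` with `B_1 = α`, `B_{-1} = β` (the index `1`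
being `i₁`), in a root system of type `D_l` (`l ≥ 5`) or `E_l`:
`S_π(α,β) = {(−B_i, B_i) : i ≠ ±1}` and
`S'_π(α,β) = {(B_i − B_1, B_1 − B_i) : i ≠ ±1}`. -/
theorem S_pi_description {E : Type*} [NormedAddCommGroup E]
    [InnerProductSpace ℝ E] {Φ : Set E} (hΦ : IsDERootSystem Φ)
    (k : ℕ) (B : Fin k → Bool → E) (hB : IsMaximalSquare Φ k B)
    {α β : E} (i₁ : Fin k) (hα : B i₁ true = α) (hβ : B i₁ false = β)
    (hperp : ⟪α, β⟫ = 0) :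
    ({p : E × E | p.1 ∈ Φ ∧ p.2 = -p.1 ∧ ⟪p.1, α⟫ = -(1 / 2) ∧
        ⟪p.1, β⟫ = -(1 / 2)} =
      {p : E × E | ∃ i b, i ≠ i₁ ∧ p = (-B i b, B i b)}) ∧
    ({p : E × E | p.1 ∈ Φ ∧ p.2 = -p.1 ∧ ⟪p.1, α⟫ = -(1 / 2) ∧
        ⟪p.1, β⟫ = 1 / 2} =
      {p : E × E | ∃ i b, i ≠ i₁ ∧ p = (B i b - α, α - B i b)}) := by
  obtain ⟨hnorm, hneg, hadd⟩ := good_of_DE hΦ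
  obtain ⟨hmem, -, hcross, hmax⟩ := hB
  have hαΦ : α ∈ Φ := hα ▸ hmem i₁ true
  have hβΦ : β ∈ Φ := hβ ▸ hmem i₁ false
  constructor
  · ext p
    simp only [Set.mem_setOf_eq]
    constructor
    · rintro ⟨h1, h2, h3, h4⟩
      have hp1α : p.1 + α ∈ Φ := hadd _ h1 _ hαΦ h3
      have h5 : ⟪p.1 + α, β⟫ = -(1/2) := by rw [inner_add_left, hperp, h4]; ring
      have hδ : (p.1 + α) + β ∈ Φ := hadd _ hp1α _ hβΦ h5
      obtain ⟨j, b, hjb⟩ := hmax _ (hneg _ h1) _ hδ i₁ (by rw [hα, hβ]; abel)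
      have hp1 : p.1 = -(B j b) := by rw [← hjb, neg_neg]
      have hj : j ≠ i₁ := by
        rintro rfl
        cases b
        · rw [hp1, hβ, inner_neg_left, hnorm β hβΦ] at h4; norm_num at h4
        · rw [hp1, hα, inner_neg_left, hnorm α hαΦ] at h3; norm_num at h3
      exact ⟨j, b, hj, Prod.ext hp1 (by rw [h2, hp1, neg_neg])⟩
    · rintro ⟨i, b, hi, rfl⟩
      refine ⟨hneg _ (hmem i b), (neg_neg _).symm, ?_, ?_⟩
      · rw [inner_neg_left, ← hα, hcross i i₁ hi b true]
      · rw [inner_neg_left, ← hβ, hcross i i₁ hi b false]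
  · ext p
    simp only [Set.mem_setOf_eq]
    constructor
    · rintro ⟨h1, h2, h3, h4⟩
      have hp1α : p.1 + α ∈ Φ := hadd _ h1 _ hαΦ h3
      have hβp : β + -p.1 ∈ Φ := hadd _ hβΦ _ (hneg _ h1)
        (by rw [real_inner_comm, inner_neg_left, h4])
      obtain ⟨j, b, hjb⟩ := hmax _ hp1α _ hβp i₁ (by rw [hα, hβ]; abel)
      have hj : j ≠ i₁ := by
        rintro rfl
        cases b
        · rw [hβ] at hjb
          have hp1 : p.1 = β - α := eq_sub_of_add_eq hjb
          rw [hp1, inner_sub_left, hnorm β hβΦ, hperp] at h4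
          norm_num at h4
        · rw [hα] at hjb
          have hp1 : p.1 = 0 := by
            have := add_right_cancel (hjb.trans (zero_add α).symm)
            exact this
          rw [hp1, inner_zero_left] at h3
          norm_num at h3
      have hp1 : p.1 = B j b - α := eq_sub_of_add_eq hjb
      exact ⟨j, b, hj, Prod.ext hp1 (by rw [h2, hp1, neg_sub])⟩
    · rintro ⟨i, b, hi, rfl⟩
      have hcr : ⟪B i b, α⟫ = 1/2 := by rw [← hα]; exact hcross i i₁ hi b true
      have hcr' : ⟪B i b, β⟫ = 1/2 := by rw [← hβ]; exact hcross i i₁ hi b false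
      refine ⟨?_, (neg_sub _ _).symm, ?_, ?_⟩
      · rw [sub_eq_add_neg]
        exact hadd _ (hmem i b) _ (hneg _ hαΦ) (by rw [inner_neg_right, hcr])
      · rw [inner_sub_left, hcr, hnorm α hαΦ]; norm_num
      · rw [inner_sub_left, hcr', hperp]; norm_num
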